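/- Let F₀, G₀ : (ℤ, ≤) → Vect_K be functors and let F = F₀ ∘ ⌊·⌋ and G = G₀ ∘ ⌊·⌋ be the persistence modules over ℝ obtained by precomposition with the floor map ⌊·⌋ : (ℝ, ≤) → (ℤ, ≤). If there exists ε with 0 ≤ ε < 1/2 such that F and G are ε-interleaved, then F₀ and G₀ are naturally isomorphic as functors (ℤ, ≤) → Vect_K. -/

import Mathlib

open scoped ENNReal

/-- A persistence module: a functor from the poset `(ℝ, ≤)` to `K`-vector spaces,
presented by its structure maps. -/
structure PersistenceModule (K : Type) [Field K] where
  X : ℝ → Type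
  [addCommGroupX : ∀ a, AddCommGroup (X a)]
  [moduleX : ∀ a, Module K (X a)]
  map : ∀ {a b : ℝ}, a ≤ b → (X a →ₗ[K] X b)
  map_refl : ∀ a : ℝ, map (le_refl a) = LinearMap.id
  map_trans : ∀ {a b c : ℝ} (hab : a ≤ b) (hbc : b ≤ c),
      map (hab.trans hbc) = (map hbc).comp (map hab)

attribute [instance] PersistenceModule.addCommGroupX PersistenceModule.moduleX

/-- The pair `(φ, ψ)` is an `ε`-interleaving between the persistence modules `F` and `G`:
both are natural transformations (to the `ε`-shifts) and the two triangle identities hold. -/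
structure IsInterleaving (K : Type) [Field K] (ε : ℝ) (F G : PersistenceModule K)
    (φ : ∀ a : ℝ, F.X a →ₗ[K] G.X (a + ε))
    (ψ : ∀ a : ℝ, G.X a →ₗ[K] F.X (a + ε)) : Prop where
  nonneg : 0 ≤ ε
  φ_nat : ∀ {a b : ℝ} (hab : a ≤ b),
      (φ b).comp (F.map hab) = (G.map (show a + ε ≤ b + ε by linarith)).comp (φ a)
  ψ_nat : ∀ {a b : ℝ} (hab : a ≤ b),
      (ψ b).comp (G.map hab) = (F.map (show a + ε ≤ b + ε by linarith)).comp (ψ a)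
  tri₁ : ∀ (a : ℝ) (h : a ≤ a + ε + ε), (ψ (a + ε)).comp (φ a) = F.map h
  tri₂ : ∀ (a : ℝ) (h : a ≤ a + ε + ε), (φ (a + ε)).comp (ψ a) = G.map h

/-- `F` and `G` are `ε`-interleaved. -/
def Interleaved (K : Type) [Field K] (ε : ℝ) (F G : PersistenceModule K) : Prop :=
  ∃ φ ψ, IsInterleaving K ε F G φ ψ

/-- The interleaving distance `d_I(F, G) ∈ [0, ∞]`: the infimum of the set of `ε ≥ 0` such
that `F` and `G` are `ε`-interleaved (`∞` when this set is empty). -/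
noncomputable def interleavingDist (K : Type) [Field K] (F G : PersistenceModule K) : ℝ≥0∞ :=
  sInf {x : ℝ≥0∞ | ∃ ε : ℝ, 0 ≤ ε ∧ Interleaved K ε F G ∧ x = ENNReal.ofReal ε}

/-- A persistence module over the poset `(ℤ, ≤)` with values in `K`-vector spaces. -/
structure PersistenceModuleZ (K : Type) [Field K] where
  X : ℤ → Type
  [addCommGroupX : ∀ a, AddCommGroup (X a)]
  [moduleX : ∀ a, Module K (X a)]
  map : ∀ {a b : ℤ}, a ≤ b → (X a →ₗ[K] X b)
  map_refl : ∀ a : ℤ, map (le_refl a) = LinearMap.id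
  map_trans : ∀ {a b c : ℤ} (hab : a ≤ b) (hbc : b ≤ c),
      map (hab.trans hbc) = (map hbc).comp (map hab)

attribute [instance] PersistenceModuleZ.addCommGroupX PersistenceModuleZ.moduleX

/-- The persistence module over `ℝ` obtained from a persistence module over `ℤ` by
precomposition with the floor map `⌊·⌋ : (ℝ, ≤) → (ℤ, ≤)`. -/
noncomputable def floorPull (K : Type) [Field K] (F₀ : PersistenceModuleZ K) :
    PersistenceModule K where
  X a := F₀.X ⌊a⌋
  map {a b} hab := F₀.map (Int.floor_le_floor hab)
  map_refl a := F₀.map_refl ⌊a⌋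
  map_trans {a b c} hab hbc := F₀.map_trans (Int.floor_le_floor hab) (Int.floor_le_floor hbc)


namespace NatIsoAux

/-- Cast a vector space in a `ℤ`-indexed persistence module along an equality of indices. -/
def cF {K : Type} [Field K] (F₀ : PersistenceModuleZ K) {m n : ℤ} (h : m = n) :
    F₀.X m ≃ₗ[K] F₀.X n := by subst h; exact LinearEquiv.refl K _

theorem cF_apply {K : Type} [Field K] (F₀ : PersistenceModuleZ K) {m n : ℤ} (h : m = n)
    (x : F₀.X m) : cF F₀ h x = F₀.map h.le x := by
  subst h; rw [F₀.map_refl]; rfl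

theorem cF_symm_apply {K : Type} [Field K] (F₀ : PersistenceModuleZ K) {m n : ℤ} (h : m = n)
    (x : F₀.X n) : (cF F₀ h).symm x = F₀.map h.symm.le x := by
  subst h; rw [F₀.map_refl]; rfl

theorem map_map {K : Type} [Field K] (F₀ : PersistenceModuleZ K) {a b c : ℤ}
    (hab : a ≤ b) (hbc : b ≤ c) (x : F₀.X a) :
    F₀.map hbc (F₀.map hab x) = F₀.map (hab.trans hbc) x := by
  rw [F₀.map_trans hab hbc]; rfl

theorem map_self {K : Type} [Field K] (F₀ : PersistenceModuleZ K) {a : ℤ}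
    (h : a ≤ a) (x : F₀.X a) : F₀.map h x = x :=
  DFunLike.congr_fun (F₀.map_refl a) x

end NatIsoAux

/-- if the pullbacks along the floor map of two `ℤ`-indexed persistence modules
are `ε`-interleaved for some `0 ≤ ε < 1/2`, then the `ℤ`-indexed modules are naturally
isomorphic. -/
theorem natIso_of_interleaved_lt_half {K : Type} [Field K] (F₀ G₀ : PersistenceModuleZ K)
    (ε : ℝ) (hε₀ : 0 ≤ ε) (hε : ε < 1 / 2)
    (h : Interleaved K ε (floorPull K F₀) (floorPull K G₀)) :
    ∃ e : ∀ n : ℤ, F₀.X n ≃ₗ[K] G₀.X n,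
      ∀ (a b : ℤ) (hab : a ≤ b),
        (G₀.map hab).comp (e a).toLinearMap = ((e b).toLinearMap).comp (F₀.map hab) := by
  classical
  obtain ⟨φ, ψ, hI⟩ := h
  open NatIsoAux in
  have hf1 : ∀ n : ℤ, (⌊(n:ℝ)⌋ : ℤ) = n := fun n => Int.floor_intCast n
  have hf2 : ∀ n : ℤ, (⌊(n:ℝ) + ε⌋ : ℤ) = n := by
    intro n
    rw [Int.floor_eq_iff]
    constructor
    · linarith
    · push_cast; linarith
  have hf3 : ∀ n : ℤ, (⌊(n:ℝ) + ε + ε⌋ : ℤ) = n := by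
    intro n
    rw [Int.floor_eq_iff]
    constructor
    · linarith
    · push_cast; linarith
  set f : ∀ n : ℤ, F₀.X n →ₗ[K] G₀.X n := fun n =>
    (NatIsoAux.cF G₀ (hf2 n)).toLinearMap ∘ₗ
      ((φ (n:ℝ) : F₀.X ⌊(n:ℝ)⌋ →ₗ[K] G₀.X ⌊(n:ℝ) + ε⌋) ∘ₗ
        (NatIsoAux.cF F₀ (hf1 n)).symm.toLinearMap) with hf
  set g : ∀ n : ℤ, G₀.X n →ₗ[K] F₀.X n := fun n =>
    (NatIsoAux.cF F₀ (hf3 n)).toLinearMap ∘ₗ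
      ((ψ ((n:ℝ) + ε) : G₀.X ⌊(n:ℝ) + ε⌋ →ₗ[K] F₀.X ⌊(n:ℝ) + ε + ε⌋) ∘ₗ
        (NatIsoAux.cF G₀ (hf2 n)).symm.toLinearMap) with hg
  have h2e : ∀ n : ℤ, (n:ℝ) ≤ (n:ℝ) + ε + ε := fun n => by linarith
  have hle₁ : ∀ n : ℤ, (n:ℝ) ≤ (n:ℝ) + ε := fun n => by linarith
  -- g ∘ f = id
  have hgf : ∀ n : ℤ, (g n).comp (f n) = LinearMap.id := by
    intro n
    ext x
    show NatIsoAux.cF F₀ (hf3 n)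
        (ψ ((n:ℝ) + ε) ((NatIsoAux.cF G₀ (hf2 n)).symm
          (NatIsoAux.cF G₀ (hf2 n)
            (φ (n:ℝ) ((NatIsoAux.cF F₀ (hf1 n)).symm x))))) = x
    erw [LinearEquiv.symm_apply_apply]
    have tri : ψ ((n:ℝ) + ε) (φ (n:ℝ) ((NatIsoAux.cF F₀ (hf1 n)).symm x))
        = F₀.map (Int.floor_le_floor (h2e n)) ((NatIsoAux.cF F₀ (hf1 n)).symm x) :=
      DFunLike.congr_fun (hI.tri₁ (n:ℝ) (h2e n)) _
    rw [tri, NatIsoAux.cF_apply, NatIsoAux.cF_symm_apply, NatIsoAux.map_map,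
      NatIsoAux.map_map]
    exact NatIsoAux.map_self F₀ _ x
  -- f ∘ g = id
  have hfg : ∀ n : ℤ, (f n).comp (g n) = LinearMap.id := by
    intro n
    ext x
    show NatIsoAux.cF G₀ (hf2 n)
        (φ (n:ℝ) ((NatIsoAux.cF F₀ (hf1 n)).symm
          (NatIsoAux.cF F₀ (hf3 n)
            (ψ ((n:ℝ) + ε) ((NatIsoAux.cF G₀ (hf2 n)).symm x))))) = x
    erw [NatIsoAux.cF_apply, NatIsoAux.cF_symm_apply, NatIsoAux.cF_apply,
      NatIsoAux.cF_symm_apply]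
    have split1 : G₀.map (hf2 n).symm.le x
        = G₀.map (Int.floor_le_floor (hle₁ n)) (G₀.map (hf1 n).symm.le x) :=
      (NatIsoAux.map_map G₀ (hf1 n).symm.le (Int.floor_le_floor (hle₁ n)) x).symm
    rw [split1]
    have step2 : ψ ((n:ℝ) + ε)
          (G₀.map (Int.floor_le_floor (hle₁ n)) (G₀.map (hf1 n).symm.le x))
        = F₀.map (Int.floor_le_floor (show (n:ℝ) + ε ≤ (n:ℝ) + ε + ε by linarith))
            (ψ (n:ℝ) (G₀.map (hf1 n).symm.le x)) :=
      DFunLike.congr_fun (hI.ψ_nat (hle₁ n)) _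
    erw [step2, NatIsoAux.map_map, NatIsoAux.map_map]
    have split2 : ∀ v : G₀.X ⌊(n:ℝ) + ε⌋, G₀.map (hf2 n).le v
        = G₀.map (hf3 n).le
            (G₀.map (Int.floor_le_floor (show (n:ℝ) + ε ≤ (n:ℝ) + ε + ε by linarith)) v) :=
      fun v => (NatIsoAux.map_map G₀
        (Int.floor_le_floor (show (n:ℝ) + ε ≤ (n:ℝ) + ε + ε by linarith)) (hf3 n).le v).symm
    erw [split2]
    have step4 : ∀ w : F₀.X ⌊(n:ℝ)⌋,
        G₀.map (Int.floor_le_floor (show (n:ℝ) + ε ≤ (n:ℝ) + ε + ε by linarith)) (φ (n:ℝ) w)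
          = φ ((n:ℝ) + ε) (F₀.map (Int.floor_le_floor (hle₁ n)) w) :=
      fun w => (DFunLike.congr_fun (hI.φ_nat (hle₁ n)) w).symm
    erw [step4, NatIsoAux.map_map, NatIsoAux.map_self]
    have step5 : φ ((n:ℝ) + ε) (ψ (n:ℝ) (G₀.map (hf1 n).symm.le x))
        = G₀.map (Int.floor_le_floor (h2e n)) (G₀.map (hf1 n).symm.le x) :=
      DFunLike.congr_fun (hI.tri₂ (n:ℝ) (h2e n)) _
    erw [step5, NatIsoAux.map_map, NatIsoAux.map_map]
    exact NatIsoAux.map_self G₀ _ x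
  refine ⟨fun n => LinearEquiv.ofLinear (f n) (g n) (hfg n) (hgf n), ?_⟩
  intro a b hab
  ext x
  have habr : (a:ℝ) ≤ (b:ℝ) := by exact_mod_cast hab
  show G₀.map hab (NatIsoAux.cF G₀ (hf2 a) (φ (a:ℝ) ((NatIsoAux.cF F₀ (hf1 a)).symm x)))
      = NatIsoAux.cF G₀ (hf2 b)
          (φ (b:ℝ) ((NatIsoAux.cF F₀ (hf1 b)).symm (F₀.map hab x)))
  erw [NatIsoAux.cF_apply, NatIsoAux.cF_symm_apply, NatIsoAux.cF_apply,
    NatIsoAux.cF_symm_apply, NatIsoAux.map_map]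
  have splitr : F₀.map (hf1 b).symm.le (F₀.map hab x)
      = F₀.map (Int.floor_le_floor habr) (F₀.map (hf1 a).symm.le x) :=
    (NatIsoAux.map_map F₀ hab (hf1 b).symm.le x).trans
      (NatIsoAux.map_map F₀ (hf1 a).symm.le (Int.floor_le_floor habr) x).symm
  rw [splitr]
  have stepn : φ (b:ℝ) (F₀.map (Int.floor_le_floor habr) (F₀.map (hf1 a).symm.le x))
      = G₀.map (Int.floor_le_floor (show (a:ℝ) + ε ≤ (b:ℝ) + ε by linarith))
          (φ (a:ℝ) (F₀.map (hf1 a).symm.le x)) :=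
    DFunLike.congr_fun (hI.φ_nat habr) _
  erw [stepn, NatIsoAux.map_map]
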